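/- Let t1, t2: Σ* ⇀ Ω* be rational functions which are not adjacent. Then there exist words x, y, z ∈ Σ* and constants c > 0 and k0 ∈ ℕ such that x y^k z ∈ dom(t1) ∩ dom(t2) for all k ∈ ℕ and ‖t1(x y^k z), t2(x y^k z)‖ ≥ c·k for all k ≥ k0. In particular, there is a constant C such that for every k ∈ ℕ there exists a word x ∈ dom(t1) ∩ dom(t2) with |x| ≤ C·(k+1) and ‖t1(x), t2(x)‖ ≥ k. -/

import Mathlib

/-! Common definitions for sliding-window / visibly pushdown formalizations. -/

/-- `γ` grows polynomially: `γ(n) ∈ O(n^k)` for some `k`. -/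
def GrowsPolynomially (γ : ℕ → ℕ) : Prop :=
  ∃ k C : ℕ, ∀ n : ℕ, γ n ≤ C * (n + 1) ^ k

/-- `γ` grows exponentially: there is `c > 1` with `γ(n) ≥ c^n` for infinitely many `n`. -/
def GrowsExponentially (γ : ℕ → ℕ) : Prop :=
  ∃ c : ℝ, 1 < c ∧ ∀ m : ℕ, ∃ n : ℕ, m ≤ n ∧ c ^ n ≤ (γ n : ℝ)

/-- A set of words is suffix-closed. -/
def SuffixClosed {α : Type} (X : Set (List α)) : Prop :=
  ∀ x ∈ X, ∀ s : List α, s <:+ x → s ∈ X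

/-- Domain of a partial function presented with `Option`. -/
def pdom {α β : Type} (t : List α → Option β) : Set (List α) := {x | t x ≠ none}

/-- The `t`-growth of `X`: the number of values of `t` on words of `X` of length at most `n`. -/
noncomputable def growthOf {α : Type} {Y : Type} (t : List α → Y) (X : Set (List α)) (n : ℕ) : ℕ :=
  (t '' {x | x ∈ X ∧ x.length ≤ n}).ncard

/-- Growth of a language: number of its words of length at most `n`. -/
noncomputable def langGrowth {β : Type} (L : Set (List β)) (n : ℕ) : ℕ :=
  {y | y ∈ L ∧ y.length ≤ n}.ncard

/-- Suffix expansion of a (total or partial) function: the tuple of values on all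
nonempty suffixes `a₁⋯aₙ, a₂⋯aₙ, …, aₙ` of the input. -/
def cev {α : Type} {Y : Type} (t : List α → Y) (x : List α) : List Y :=
  x.tails.dropLast.map t

/-- Image of `X` under the partial function `t`. -/
def optImage {α β : Type} (t : List α → Option β) (X : Set (List α)) : Set β :=
  {y | ∃ x ∈ X, t x = some y}

/-- A language is bounded if it is contained in `w₁* w₂* ⋯ w_k*`. -/
def BoundedLang {β : Type} (L : Set (List β)) : Prop :=
  ∃ ws : List (List β), ∀ x ∈ L, ∃ ms : List ℕ, ms.length = ws.length ∧
    x = (List.zipWith (fun (w : List β) (m : ℕ) => (List.replicate m w).flatten) ws ms).flatten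

/-- `{u,v}*`: all concatenations of copies of `u` and `v`. -/
def UVStar {α : Type} (u v : List α) : Set (List α) :=
  {w | ∃ l : List (List α), (∀ p ∈ l, p = u ∨ p = v) ∧ w = l.flatten}

/-- `{u,v}^{≤ n}`: concatenations of at most `n` words, each equal to `u` or `v`. -/
def UVPow {α : Type} (u v : List α) (n : ℕ) : Set (List α) :=
  {w | ∃ l : List (List α), (∀ p ∈ l, p = u ∨ p = v) ∧ l.length ≤ n ∧ w = l.flatten}

/-- The set `{u₂,v₂}{u,v}* Z`. -/
def FoolingSet {α : Type} (u₂ v₂ u v : List α) (Z : Set (List α)) : Set (List α) :=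
  {x | ∃ a w z, (a = u₂ ∨ a = v₂) ∧ w ∈ UVStar u v ∧ z ∈ Z ∧ x = a ++ (w ++ z)}

/-- Linear fooling scheme for a partial function `t`. -/
def IsLinearFoolingScheme {α Y : Type} (t : List α → Option Y)
    (u₂ v₂ u v : List α) (Z : Set (List α)) : Prop :=
  u₂ <:+ u ∧ v₂ <:+ v ∧ u₂.length = v₂.length ∧
  FoolingSet u₂ v₂ u v Z ⊆ pdom t ∧
  ∃ C : ℕ, ∀ n : ℕ, ∃ z ∈ Z, z.length ≤ C * (n + 1) ∧
    ∀ w ∈ UVPow u v n, t (u₂ ++ (w ++ z)) ≠ t (v₂ ++ (w ++ z))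

/-- `X` contains a linear fooling set for `t`. -/
def ContainsLinearFoolingSet {α Y : Type} (t : List α → Option Y) (X : Set (List α)) : Prop :=
  ∃ u₂ v₂ u v Z, IsLinearFoolingScheme t u₂ v₂ u v Z ∧ FoolingSet u₂ v₂ u v Z ⊆ X

/-! ### Transducers and rational functions -/

/-- A finite-state transducer over `(α, β)` with terminal output function. -/
structure Transducer (α β : Type) where
  Q : Type
  finQ : Fintype Q
  I : Set Q
  F : Set Q
  Δ : Set (Q × List α × List β × Q)
  finΔ : Δ.Finite
  o : Q → List β

namespace Transducer

variable {α β : Type}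

/-- A run from `p` to `r` with input `x` and output `y`. -/
inductive Run (A : Transducer α β) : A.Q → List α → List β → A.Q → Prop
  | nil (q : A.Q) : Run A q [] [] q
  | cons {p q r : A.Q} {x₁ x : List α} {y₁ y : List β} :
      (p, x₁, y₁, q) ∈ A.Δ → Run A q x y r → Run A p (x₁ ++ x) (y₁ ++ y) r

/-- The transduction defined by a transducer. -/
def T (A : Transducer α β) : Set (List α × List β) :=
  {p | ∃ q₀ q y, q₀ ∈ A.I ∧ q ∈ A.F ∧ A.Run q₀ p.1 y q ∧ p.2 = y ++ A.o q}

end Transducer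

/-- A partial function is rational if its graph is the transduction of some transducer. -/
def IsRationalFun {α β : Type} (t : List α → Option (List β)) : Prop :=
  ∃ A : Transducer α β, ∀ x y, t x = some y ↔ (x, y) ∈ A.T

/-! ### Right congruences, suffix expansions, critical tuples -/

/-- A right congruence: an equivalence relation compatible with appending on the right. -/
def IsRightCongruence {α : Type} (r : List α → List α → Prop) : Prop :=
  Equivalence r ∧ ∀ x y z : List α, r x y → r (x ++ z) (y ++ z)

/-- Suffix expansion of a relation: words of the same length whose corresponding
nonempty suffixes are all related. -/
def SuffixExpansion {α : Type} (r : List α → List α → Prop) (x y : List α) : Prop :=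
  x.length = y.length ∧ ∀ i < x.length, r (x.drop i) (y.drop i)

/-- Number of `r`-classes of words of length at most `n`. -/
noncomputable def classCount {α : Type} (r : List α → List α → Prop) (n : ℕ) : ℕ :=
  Set.ncard {C : Set (List α) | ∃ x : List α, x.length ≤ n ∧ C = {y | r x y}}

/-- A relation has finite index if it has finitely many classes. -/
def FiniteIndex {α : Type} (r : List α → List α → Prop) : Prop :=
  Set.Finite {C : Set (List α) | ∃ x : List α, C = {y | r x y}}

/-- Critical tuple in a right congruence. -/
def IsCriticalTuple {α : Type} (r : List α → List α → Prop) (u₂ v₂ u v : List α) : Prop :=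
  1 ≤ u₂.length ∧ u₂.length = v₂.length ∧ u₂ <:+ u ∧ v₂ <:+ v ∧
  ∀ w ∈ UVStar u v, ¬ r (u₂ ++ w) (v₂ ++ w)

/-- The Myhill–Nerode right congruence of a language. -/
def MNrel {α : Type} (L : Set (List α)) (x y : List α) : Prop :=
  ∀ z : List α, x ++ z ∈ L ↔ y ++ z ∈ L

/-! ### Suffix distance and the canonical right congruence of a rational function -/

/-- Longest common prefix. -/
def cpre {β : Type} [DecidableEq β] : List β → List β → List β
  | a :: x, b :: y => if a = b then a :: cpre x y else []
  | _, _ => []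

/-- `‖x,y‖ = |x| + |y| − 2|x ∧ y|`, where `x ∧ y` is the longest common suffix. -/
def suffDist {β : Type} [DecidableEq β] (x y : List β) : ℕ :=
  x.length + y.length - 2 * (cpre x.reverse y.reverse).length

/-- Value of a partial function (defaulting to the empty word off the domain). -/
def pval {α β : Type} (t : List α → Option (List β)) (x : List α) : List β :=
  (t x).getD []

/-- The right congruence `R_t` of Reutenauer–Schützenberger. -/
def Rt {α β : Type} [DecidableEq β] (t : List α → Option (List β)) (u v : List α) : Prop :=
  (∀ z : List α, u ++ z ∈ pdom t ↔ v ++ z ∈ pdom t) ∧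
  Set.Finite {d : ℕ | ∃ w : List α, u ++ w ∈ pdom t ∧ v ++ w ∈ pdom t ∧
      d = suffDist (pval t (u ++ w)) (pval t (v ++ w))}

/-- Two partial functions are adjacent. -/
def Adjacent {α β : Type} [DecidableEq β] (t₁ t₂ : List α → Option (List β)) : Prop :=
  Set.Finite {d : ℕ | ∃ w : List α, w ∈ pdom t₁ ∧ w ∈ pdom t₂ ∧
      d = suffDist (pval t₁ w) (pval t₂ w)}

/-! ### Visibly pushdown automata -/

/-- Kinds of letters of a pushdown alphabet. -/
inductive VPKind : Type
  | call : VPKind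
  | ret : VPKind
  | intern : VPKind
deriving DecidableEq

/-- A visibly pushdown automaton over the pushdown alphabet determined by `pa`.
The bottom-of-stack symbol `⊥` is represented implicitly by the empty stack. -/
structure VPA (α : Type) (pa : α → VPKind) where
  Q : Type
  finQ : Fintype Q
  Γ : Type
  finΓ : Fintype Γ
  q₀ : Q
  F : Set Q
  δc : Q → α → Γ × Q
  δr : Q → α → Option Γ → Q
  δi : Q → α → Q

namespace VPA

variable {α : Type} {pa : α → VPKind}

/-- One step of the VPA on a configuration (stack with top at the head, state). -/
def step (A : VPA α pa) (c : List A.Γ × A.Q) (a : α) : List A.Γ × A.Q :=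
  match pa a with
  | VPKind.call => ((A.δc c.2 a).1 :: c.1, (A.δc c.2 a).2)
  | VPKind.intern => (c.1, A.δi c.2 a)
  | VPKind.ret =>
    match c.1 with
    | [] => ([], A.δr c.2 a none)
    | γ :: st => (st, A.δr c.2 a (some γ))

/-- Extended transition function on words. -/
def run (A : VPA α pa) (c : List A.Γ × A.Q) (w : List α) : List A.Γ × A.Q :=
  w.foldl A.step c

/-- The language accepted by a VPA (from the initial configuration `⊥q₀`). -/
def acceptsLang (A : VPA α pa) : Set (List α) :=
  {w | (A.run ([], A.q₀) w).2 ∈ A.F}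

/-- Language accepted from a configuration. -/
def AccLang (A : VPA α pa) (c : List A.Γ × A.Q) : Set (List α) :=
  {w | (A.run c w).2 ∈ A.F}

/-- The reachable configurations. -/
def rConf (A : VPA α pa) : Set (List A.Γ × A.Q) :=
  Set.range (fun w => A.run ([], A.q₀) w)

end VPA

/-- A language is a visibly pushdown language over the pushdown alphabet `pa`. -/
def IsVPL {α : Type} (pa : α → VPKind) (L : Set (List α)) : Prop :=
  ∃ A : VPA α pa, L = A.acceptsLang

/-- Well-matched words over a pushdown alphabet. -/
inductive WellMatched {α : Type} (pa : α → VPKind) : List α → Prop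
  | nil : WellMatched pa []
  | intern (a : α) : pa a = VPKind.intern → WellMatched pa [a]
  | append {u v : List α} : WellMatched pa u → WellMatched pa v → WellMatched pa (u ++ v)
  | wrap {w : List α} {a b : α} : WellMatched pa w → pa a = VPKind.call → pa b = VPKind.ret →
      WellMatched pa (a :: (w ++ [b]))

/-- Descending words: concatenations of well-matched words and return letters. -/
def Descending {α : Type} (pa : α → VPKind) (w : List α) : Prop :=
  ∃ l : List (List α),
    (∀ p ∈ l, WellMatched pa p ∨ ∃ b : α, pa b = VPKind.ret ∧ p = [b]) ∧ w = l.flatten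

/-- Length-lexicographic order on configurations `⊥αq` (stacks compared bottom-first). -/
def ConfLe {Q Γ : Type} (ltQ : LinearOrder Q) (ltΓ : LinearOrder Γ)
    (c d : List Γ × Q) : Prop :=
  c.1.length < d.1.length ∨
    (c.1.length = d.1.length ∧
      (List.Lex ltΓ.lt c.1.reverse d.1.reverse ∨ (c.1 = d.1 ∧ ltQ.le c.2 d.2)))

/-- `rep` chooses from each equivalence class of reachable configurations the
length-lexicographically least representative. -/
def IsRepFun {α : Type} {pa : α → VPKind} (A : VPA α pa)
    (ltQ : LinearOrder A.Q) (ltΓ : LinearOrder A.Γ)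
    (rep : List A.Γ × A.Q → List A.Γ × A.Q) : Prop :=
  ∀ c ∈ A.rConf, rep c ∈ A.rConf ∧ A.AccLang (rep c) = A.AccLang c ∧
    ∀ c' ∈ A.rConf, A.AccLang c' = A.AccLang c → ConfLe ltQ ltΓ (rep c) c'

/-- `ν_A(w)`: the representative of the configuration reached on `w`. -/
def nuA {α : Type} {pa : α → VPKind} (A : VPA α pa)
    (rep : List A.Γ × A.Q → List A.Γ × A.Q) (w : List α) : List A.Γ × A.Q :=
  rep (A.run ([], A.q₀) w)

/-- `σ₀(w)`: the states representing the Myhill–Nerode classes of the nonempty suffixes. -/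
def sigma0 {α : Type} {pa : α → VPKind} (A : VPA α pa)
    (rep : List A.Γ × A.Q → List A.Γ × A.Q) (w : List α) : List A.Q :=
  w.tails.dropLast.map fun s => (nuA A rep s).2

/-- `φ(w)`: the state transformation of a well-matched word. -/
def phiVPA {α : Type} {pa : α → VPKind} (A : VPA α pa) (w : List α) : A.Q → A.Q :=
  fun p => (A.run ([], p) w).2

/-- `σ₁(w) = φ(w) q₂ ⋯ qₙ`, a word over the alphabet `Q^Q ∪ Q`. -/
def sigma1 {α : Type} {pa : α → VPKind} (A : VPA α pa)
    (rep : List A.Γ × A.Q → List A.Γ × A.Q) (w : List α) : List ((A.Q → A.Q) ⊕ A.Q) :=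
  Sum.inl (phiVPA A w) :: ((sigma0 A rep w).tail.map Sum.inr)

/-! ### Real-time right transducers -/

/-- A real-time right transducer (reads its input from right to left). -/
structure RightTransducer (α β : Type) where
  Q : Type
  finQ : Fintype Q
  F : Set Q
  I : Set Q
  Δ : Set (Q × α × List β × Q)
  finΔ : Δ.Finite
  o : Q → List β

namespace RightTransducer

variable {α β : Type}

/-- Input word of a sequence of transitions. -/
def inputOf {Q : Type} (ts : List (Q × α × List β × Q)) : List α :=
  ts.map fun tr => tr.2.1

/-- Output word of a sequence of transitions. -/
def outputOf {Q : Type} (ts : List (Q × α × List β × Q)) : List β :=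
  (ts.map fun tr => tr.2.2.1).flatten

/-- `IsRunFrom A q ts p`: `ts` is a run on its input from the (rightmost) state `p`
to the (leftmost) state `q`; the transitions are listed left to right. -/
def IsRunFrom (A : RightTransducer α β) : A.Q → List (A.Q × α × List β × A.Q) → A.Q → Prop
  | q, [], p => q = p
  | q, tr :: ts, p => tr ∈ A.Δ ∧ tr.1 = q ∧ IsRunFrom A tr.2.2.2 ts p

/-- There is a run on `w` from `p` (right) to `q` (left). -/
def RunOn (A : RightTransducer α β) (q : A.Q) (w : List α) (p : A.Q) : Prop :=
  ∃ ts, A.IsRunFrom q ts p ∧ inputOf ts = w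

/-- `q ⪯ p`: there is a run from `p` to `q`. -/
def Below (A : RightTransducer α β) (q p : A.Q) : Prop :=
  ∃ w, A.RunOn q w p

/-- The partial function defined by a right transducer. -/
def Defines (A : RightTransducer α β) (t : List α → Option (List β)) : Prop :=
  ∀ x y, t x = some y ↔ ∃ p q ts, p ∈ A.F ∧ q ∈ A.I ∧ A.IsRunFrom p ts q ∧
    inputOf ts = x ∧ y = A.o p ++ outputOf ts

/-- Every state occurs on some initial accepting run. -/
def Trim (A : RightTransducer α β) : Prop :=
  ∀ s : A.Q, ∃ p q ts₁ ts₂, p ∈ A.F ∧ q ∈ A.I ∧ A.IsRunFrom p ts₁ s ∧ A.IsRunFrom s ts₂ q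

/-- Every input word has at most one initial accepting run. -/
def Unambiguous (A : RightTransducer α β) : Prop :=
  ∀ p p' q q' ts ts', p ∈ A.F → p' ∈ A.F → q ∈ A.I → q' ∈ A.I →
    A.IsRunFrom p ts q → A.IsRunFrom p' ts' q' → inputOf ts = inputOf ts' →
    p = p' ∧ ts = ts'

/-- `w` is guarded by `p`: some run on `w` from `p` stays in the SCC of `p`. -/
def Guarded (A : RightTransducer α β) (p : A.Q) (w : List α) : Prop :=
  ∃ q', A.RunOn q' w p ∧ A.Below p q'

/-- The transducer is well-behaved: the terminal outputs of guarded accepting runs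
from the same state on words of equal length coincide. -/
def WellBehaved (A : RightTransducer α β) : Prop :=
  ∀ (p q q' : A.Q) ts ts', q ∈ A.F → q' ∈ A.F →
    A.IsRunFrom q ts p → A.IsRunFrom q' ts' p →
    A.Guarded p (inputOf ts) → A.Guarded p (inputOf ts') →
    (inputOf ts).length = (inputOf ts').length →
    A.o q ++ outputOf ts = A.o q' ++ outputOf ts'

end RightTransducer

/-! ### The Parikh-like map Ψ -/

/-- `Ψ(w)`: each letter of `w` paired with its position counted from the right (1-based). -/
def Psi {α : Type} (w : List α) : Set (α × ℕ) :=
  {p | ∃ i : ℕ, w[i]? = some p.1 ∧ p.2 = w.length - i}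

/-- `Ψ(L) = ⋃_{w ∈ L} Ψ(w)`. -/
def PsiL {α : Type} (L : Set (List α)) : Set (α × ℕ) :=
  ⋃ w ∈ L, Psi w

/-!
Pump a shortest witness. The distance is bounded by some `B` on all words of length at most `N`,
where `N` depends only on the two transducers; let `w` be a shortest word in both domains whose
distance exceeds `B`. Then `|w| > N`, so by pigeonhole two positions `i < j` of `w` are read at the
same offset of the same transition by an accepting run of each transducer. Cutting `w = x y z` at
`i` and `j` gives `tₘ(x yᵏ z) = aₘ bₘᵏ cₘ` for both `m`. The distance between two such families is
either constant in `k` or grows at least linearly: if `|b₁| ≠ |b₂|` the lengths drift apart, and if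
`|b₁| = |b₂|`, then (reading the words backwards) either the periodic parts eventually disagree,
or they stay prefix-comparable, and then one side is the other shifted by a fixed conjugating word.
A constant distance is impossible, since then `x z` would be a shorter witness.
-/

section WordPow

variable {γ δ : Type*}

def wordPow (y : List γ) (k : ℕ) : List γ := (List.replicate k y).flatten

@[simp] lemma wordPow_zero (y : List γ) : wordPow y 0 = [] := rfl

lemma wordPow_succ (y : List γ) (k : ℕ) : wordPow y (k + 1) = y ++ wordPow y k := by
  simp [wordPow, List.replicate_succ]

@[simp] lemma wordPow_one (y : List γ) : wordPow y 1 = y := by simp [wordPow]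

lemma wordPow_add (y : List γ) (m n : ℕ) : wordPow y (m + n) = wordPow y m ++ wordPow y n := by
  rw [wordPow, List.replicate_add, List.flatten_append, wordPow, wordPow]

@[simp] lemma length_wordPow (y : List γ) (k : ℕ) : (wordPow y k).length = k * y.length := by
  simp [wordPow]

@[simp] lemma wordPow_nil (k : ℕ) : wordPow ([] : List γ) k = [] := by simp [wordPow]

lemma reverse_wordPow (y : List γ) (k : ℕ) : (wordPow y k).reverse = wordPow y.reverse k := by
  induction k with
  | zero => rfl
  | succ k ih => rw [wordPow_succ, List.reverse_append, ih, wordPow_add, wordPow_one]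

lemma wordPow_append_conj (u v : List γ) (k : ℕ) :
    wordPow (u ++ v) k ++ u = u ++ wordPow (v ++ u) k := by
  induction k with
  | zero => simp
  | succ k ih => simp only [wordPow_succ, List.append_assoc, ih]

lemma flatMap_wordPow (l : List γ) (f : γ → List δ) (k : ℕ) :
    (wordPow l k).flatMap f = wordPow (l.flatMap f) k := by
  induction k with
  | zero => rfl
  | succ k ih => rw [wordPow_succ, wordPow_succ, List.flatMap_append, ih]

lemma reverse_pump (a b c : List γ) (k : ℕ) :
    (a ++ wordPow b k ++ c).reverse = c.reverse ++ wordPow b.reverse k ++ a.reverse := by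
  simp only [List.reverse_append, reverse_wordPow, List.append_assoc]

lemma prefix_of_comparable_of_length_le {u v : List γ} (h : u <+: v ∨ v <+: u)
    (hl : u.length ≤ v.length) : u <+: v :=
  h.elim id fun hvu => List.prefix_of_prefix_length_le (List.prefix_refl u) hvu hl

lemma exists_conj_of_forall_prefix {a b a' b' : List γ}
    (hg : b.length = b'.length) (hb : 0 < b.length)
    (hpre : ∀ k, a ++ wordPow b k <+: a' ++ wordPow b' k) :
    ∃ T, ∀ k, a' ++ wordPow b' k = a ++ wordPow b k ++ T := by
  obtain ⟨T, rfl⟩ : a <+: a' := by simpa using hpre 0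
  have hcover : ∀ k, T ++ wordPow b' k <+: wordPow b k ++ wordPow b T.length := by
    intro k
    have hK : T.length ≤ T.length * b.length := Nat.le_mul_of_pos_right _ hb
    have h : a ++ T ++ wordPow b' k <+: a ++ wordPow b (k + T.length) := by
      refine List.prefix_of_prefix_length_le ?_ (hpre (k + T.length)) ?_
      · rw [wordPow_add, ← List.append_assoc]
        exact List.prefix_append _ _
      · simp only [List.length_append, length_wordPow, add_mul, ← hg]
        omega
    rwa [wordPow_add, List.append_assoc, List.prefix_append_right_inj] at h
  have hT : T <+: wordPow b T.length := by simpa using hcover 0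
  refine ⟨T, fun k => ?_⟩
  obtain ⟨R, hR⟩ : wordPow b k <+: T ++ wordPow b' k := by
    simpa only [List.append_assoc, List.prefix_append_right_inj] using hpre k
  have hRT : R = T := by
    have hR' : R <+: wordPow b T.length := by
      simpa only [← hR, List.prefix_append_right_inj] using hcover k
    have hlen : R.length = T.length := by
      have := congrArg List.length hR
      simp only [List.length_append, length_wordPow, ← hg] at this
      omega
    exact (List.prefix_of_prefix_length_le hR' hT hlen.le).eq_of_length hlen
  rw [List.append_assoc a T, ← hR, hRT, List.append_assoc]

lemma take_drop_of_eq_append {w x y z : List γ} (h : w = x ++ y ++ z) :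
    w.take x.length = x ∧ (w.take (x.length + y.length)).drop x.length = y ∧
      w.drop (x.length + y.length) = z := by
  subst h
  refine ⟨by simp, ?_, ?_⟩
  · rw [List.append_assoc, List.take_append, List.take_of_length_le (by simp)]
    simp
  · rw [List.append_assoc, ← List.length_append, ← List.append_assoc, List.drop_left]

lemma take_append_drop_take_append_drop (w : List γ) {i j : ℕ} (hij : i ≤ j) :
    w.take i ++ (w.take j).drop i ++ w.drop j = w := by
  rw [show w.take i = (w.take j).take i by rw [List.take_take, min_eq_left hij],
    List.take_append_drop, List.take_append_drop]

end WordPow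

section CommonPrefix

variable {β : Type} [DecidableEq β]

lemma cpre_comm (x y : List β) : cpre x y = cpre y x := by
  induction x generalizing y with
  | nil => cases y <;> rfl
  | cons a x ih =>
    cases y with
    | nil => rfl
    | cons b y =>
      by_cases h : a = b
      · subst h; simp [cpre, ih]
      · simp [cpre, h, Ne.symm h]

lemma cpre_prefix_left (x y : List β) : cpre x y <+: x := by
  induction x generalizing y with
  | nil => cases y <;> exact List.nil_prefix
  | cons a x ih =>
    cases y with
    | nil => exact List.nil_prefix
    | cons b y =>
      unfold cpre
      split
      · exact List.cons_prefix_cons.mpr ⟨rfl, ih y⟩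
      · exact List.nil_prefix

lemma cpre_prefix_right (x y : List β) : cpre x y <+: y :=
  cpre_comm x y ▸ cpre_prefix_left y x

lemma cpre_append_left (u s s' : List β) : cpre (u ++ s) (u ++ s') = u ++ cpre s s' := by
  induction u with
  | nil => rfl
  | cons a u ih => simp [cpre, ih]

lemma length_cpre_lt_of_not_prefix {u y : List β} (s : List β) (h : ¬ u <+: y) :
    (cpre (u ++ s) y).length < u.length := by
  by_contra hle
  have hu : u <+: cpre (u ++ s) y :=
    List.prefix_of_prefix_length_le (List.prefix_append u s) (cpre_prefix_left _ _) (by omega)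
  exact h (hu.trans (cpre_prefix_right _ _))

def prefDist (x y : List β) : ℕ := x.length + y.length - 2 * (cpre x y).length

lemma suffDist_eq_prefDist (x y : List β) : suffDist x y = prefDist x.reverse y.reverse := by
  rw [suffDist, prefDist, List.length_reverse, List.length_reverse]

lemma prefDist_comm (x y : List β) : prefDist x y = prefDist y x := by
  rw [prefDist, prefDist, cpre_comm, Nat.add_comm]

lemma prefDist_append_left (u s s' : List β) : prefDist (u ++ s) (u ++ s') = prefDist s s' := by
  simp only [prefDist, cpre_append_left, List.length_append]
  omega

lemma length_sub_length_le_prefDist (x y : List β) : y.length - x.length ≤ prefDist x y := by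
  have := (cpre_prefix_left x y).length_le
  unfold prefDist
  omega

end CommonPrefix

section PumpedDistance

variable {β : Type} [DecidableEq β]

lemma prefDist_pump_linear_of_length_lt {a b c a' b' c' : List β}
    (h : b.length < b'.length) (k : ℕ) :
    k ≤ prefDist (a ++ wordPow b k ++ c) (a' ++ wordPow b' k ++ c') + (a.length + c.length) := by
  have hdist := length_sub_length_le_prefDist (a ++ wordPow b k ++ c) (a' ++ wordPow b' k ++ c')
  have hk : k * b.length + k ≤ k * b'.length := by nlinarith
  simp only [List.length_append, length_wordPow] at hdist
  omega

lemma prefDist_pump_linear_of_not_comparable {a b c a' b' c' : List β}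
    (hg : b.length = b'.length) (hb : 0 < b.length) {k₀ : ℕ}
    (h : ¬ (a ++ wordPow b k₀ <+: a' ++ wordPow b' k₀ ∨ a' ++ wordPow b' k₀ <+: a ++ wordPow b k₀))
    (k : ℕ) :
    k ≤ prefDist (a ++ wordPow b k ++ c) (a' ++ wordPow b' k ++ c') + 2 * (k₀ * b.length) := by
  have hk₀ : k₀ ≤ k₀ * b.length := Nat.le_mul_of_pos_right k₀ hb
  rcases lt_or_ge k k₀ with hk | hk
  · omega
  obtain ⟨m, rfl⟩ := Nat.exists_eq_add_of_le hk
  have hm : m ≤ m * b.length := Nat.le_mul_of_pos_right m hb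
  set u := a ++ wordPow b k₀
  set v := a' ++ wordPow b' k₀
  have hp : a ++ wordPow b (k₀ + m) ++ c = u ++ (wordPow b m ++ c) := by
    simp only [u, wordPow_add, List.append_assoc]
  have hq : a' ++ wordPow b' (k₀ + m) ++ c' = v ++ (wordPow b' m ++ c') := by
    simp only [v, wordPow_add, List.append_assoc]
  have hu : ¬ u <+: v ++ (wordPow b' m ++ c') := fun hu =>
    h (List.prefix_or_prefix_of_prefix hu (List.prefix_append _ _))
  have hv : ¬ v <+: u ++ (wordPow b m ++ c) := fun hv =>
    h (List.prefix_or_prefix_of_prefix (List.prefix_append _ _) hv)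
  have hcu := length_cpre_lt_of_not_prefix (wordPow b m ++ c) hu
  have hcv := length_cpre_lt_of_not_prefix (wordPow b' m ++ c') hv
  rw [cpre_comm] at hcv
  rw [hp, hq, prefDist]
  simp only [u, v, List.length_append, length_wordPow, ← hg] at hcu hcv ⊢
  omega

lemma prefDist_pump_eq_of_forall_prefix {a b c a' b' c' : List β}
    (hg : b.length = b'.length) (hb : 0 < b.length)
    (hpre : ∀ k, a ++ wordPow b k <+: a' ++ wordPow b' k) (k : ℕ) :
    prefDist (a ++ wordPow b k ++ c) (a' ++ wordPow b' k ++ c') = prefDist (a ++ c) (a' ++ c') := by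
  obtain ⟨T, hT⟩ := exists_conj_of_forall_prefix hg hb hpre
  have h₀ : a' = a ++ T := by simpa using hT 0
  rw [hT k, List.append_assoc _ T c', prefDist_append_left, h₀, List.append_assoc a T c',
    prefDist_append_left]

theorem prefDist_pump_const_or_linear (a b c a' b' c' : List β) :
    (∀ k, prefDist (a ++ wordPow b k ++ c) (a' ++ wordPow b' k ++ c') =
      prefDist (a ++ c) (a' ++ c')) ∨
    ∃ A, ∀ k, k ≤ prefDist (a ++ wordPow b k ++ c) (a' ++ wordPow b' k ++ c') + A := by
  rcases lt_trichotomy b.length b'.length with hlt | hg | hgt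
  · exact .inr ⟨_, prefDist_pump_linear_of_length_lt hlt⟩
  · rcases Nat.eq_zero_or_pos b.length with h₀ | hb
    · left
      intro k
      obtain rfl : b = [] := List.length_eq_zero_iff.mp h₀
      obtain rfl : b' = [] := List.length_eq_zero_iff.mp (by omega)
      simp
    by_cases hcomp : ∀ k, a ++ wordPow b k <+: a' ++ wordPow b' k ∨
        a' ++ wordPow b' k <+: a ++ wordPow b k
    · left
      rcases le_total a.length a'.length with hle | hle
      · refine prefDist_pump_eq_of_forall_prefix hg hb fun k =>
          prefix_of_comparable_of_length_le (hcomp k) ?_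
        simp only [List.length_append, length_wordPow, hg]
        omega
      · intro k
        rw [prefDist_comm, prefDist_comm (a ++ c)]
        refine prefDist_pump_eq_of_forall_prefix hg.symm (hg ▸ hb) (fun k =>
          prefix_of_comparable_of_length_le (hcomp k).symm ?_) k
        simp only [List.length_append, length_wordPow, hg]
        omega
    · obtain ⟨k₀, hk₀⟩ := not_forall.mp hcomp
      exact .inr ⟨_, prefDist_pump_linear_of_not_comparable hg hb hk₀⟩
  · refine .inr ⟨a'.length + c'.length, fun k => ?_⟩
    rw [prefDist_comm]
    exact prefDist_pump_linear_of_length_lt hgt k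

theorem suffDist_pump_const_or_linear (a b c a' b' c' : List β) :
    (∀ k, suffDist (a ++ wordPow b k ++ c) (a' ++ wordPow b' k ++ c') =
      suffDist (a ++ c) (a' ++ c')) ∨
    ∃ A, ∀ k, k ≤ suffDist (a ++ wordPow b k ++ c) (a' ++ wordPow b' k ++ c') + A := by
  simp only [suffDist_eq_prefDist, reverse_pump]
  simp only [List.reverse_append]
  exact prefDist_pump_const_or_linear _ _ _ _ _ _

end PumpedDistance

def PumpsAlong {α β : Type} (t : List α → Option (List β)) (x y z : List α) : Prop :=
  ∃ a b c : List β, ∀ k, t (x ++ wordPow y k ++ z) = some (a ++ wordPow b k ++ c)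

lemma PumpsAlong.mem_pdom {α β : Type} {t : List α → Option (List β)} {x y z : List α}
    (h : PumpsAlong t x y z) (k : ℕ) : x ++ wordPow y k ++ z ∈ pdom t := by
  obtain ⟨a, b, c, h⟩ := h
  exact fun hnone => Option.some_ne_none _ ((h k).symm.trans hnone)

namespace Transducer

section Positions

variable {α β Q : Type}

def inputOf (ts : List (Q × List α × List β × Q)) : List α := ts.flatMap (·.2.1)

def outputOf (ts : List (Q × List α × List β × Q)) : List β := ts.flatMap (·.2.2.1)

def ReadsAt (ts : List (Q × List α × List β × Q)) (i : ℕ) (tr : Q × List α × List β × Q)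
    (d : ℕ) : Prop :=
  ∃ Aₚ Bₛ, ts = Aₚ ++ tr :: Bₛ ∧ d < tr.2.1.length ∧ i = (inputOf Aₚ).length + d

lemma exists_readsAt_of_lt_length {ts : List (Q × List α × List β × Q)} {i : ℕ}
    (h : i < (inputOf ts).length) : ∃ tr d, ReadsAt ts i tr d := by
  induction ts generalizing i with
  | nil => simp [inputOf] at h
  | cons tr ts ih =>
    by_cases hi : i < tr.2.1.length
    · exact ⟨tr, i, [], ts, rfl, hi, by simp [inputOf]⟩
    · obtain ⟨tr', d, Aₚ, Bₛ, rfl, hd, hidx⟩ := ih (i := i - tr.2.1.length)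
        (by simp [inputOf] at h ⊢; omega)
      exact ⟨tr', d, tr :: Aₚ, Bₛ, rfl, hd, by simp [inputOf] at hidx ⊢; omega⟩

lemma ReadsAt.exists_loop {ts : List (Q × List α × List β × Q)} {i j d : ℕ}
    {tr : Q × List α × List β × Q} (hi : ReadsAt ts i tr d) (hj : ReadsAt ts j tr d)
    (hij : i < j) :
    ∃ Aᵢ M Bⱼ, ts = Aᵢ ++ tr :: (M ++ tr :: Bⱼ) ∧ i = (inputOf Aᵢ).length + d ∧
      j = (inputOf (Aᵢ ++ tr :: M)).length + d := by
  obtain ⟨Aᵢ, Bᵢ, rfl, -, rfl⟩ := hi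
  obtain ⟨Aⱼ, Bⱼ, hts, -, rfl⟩ := hj
  have hlen : (inputOf Aᵢ).length < (inputOf Aⱼ).length := by omega
  obtain ⟨M, rfl⟩ : Aᵢ ++ [tr] <+: Aⱼ := by
    refine List.prefix_of_prefix_length_le ⟨Bᵢ, by simp⟩ ⟨tr :: Bⱼ, hts.symm⟩ ?_
    by_contra! hshort
    have hpre : Aⱼ <+: Aᵢ :=
      List.prefix_of_prefix_length_le ⟨tr :: Bⱼ, hts.symm⟩ ⟨tr :: Bᵢ, rfl⟩ (by simpa using hshort)
    obtain ⟨E, rfl⟩ := hpre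
    simp [inputOf] at hlen
  refine ⟨Aᵢ, M, Bⱼ, ?_, rfl, by simp⟩
  simpa using hts

end Positions

variable {α β : Type}

/-- A `Run`, recorded as its list of transitions so that input positions can be located in it. -/
def IsTrace (A : Transducer α β) : A.Q → List (A.Q × List α × List β × A.Q) → A.Q → Prop
  | p, [], q => p = q
  | p, tr :: ts, q => tr ∈ A.Δ ∧ tr.1 = p ∧ A.IsTrace tr.2.2.2 ts q

def letterSlots (A : Transducer α β) : Set ((A.Q × List α × List β × A.Q) × ℕ) :=
  {s | s.1 ∈ A.Δ ∧ s.2 < s.1.2.1.length}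

lemma letterSlots_finite (A : Transducer α β) : A.letterSlots.Finite := by
  obtain ⟨m, hm⟩ := (A.finΔ.image fun tr => tr.2.1.length).bddAbove
  exact (A.finΔ.prod (Set.finite_Iic m)).subset fun s hs =>
    ⟨hs.1, hs.2.le.trans (hm ⟨s.1, hs.1, rfl⟩)⟩

variable {A : Transducer α β}

lemma isTrace_append {p q : A.Q} {l₁ l₂ : List (A.Q × List α × List β × A.Q)} :
    A.IsTrace p (l₁ ++ l₂) q ↔ ∃ r, A.IsTrace p l₁ r ∧ A.IsTrace r l₂ q := by
  induction l₁ generalizing p with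
  | nil => simp [IsTrace]
  | cons tr l₁ ih => simp [IsTrace, ih, and_assoc]

lemma run_iff_exists_trace {p q : A.Q} {x : List α} {y : List β} :
    A.Run p x y q ↔ ∃ ts, A.IsTrace p ts q ∧ inputOf ts = x ∧ outputOf ts = y := by
  constructor
  · intro h
    induction h with
    | nil q => exact ⟨[], rfl, rfl, rfl⟩
    | @cons p q r x₁ x y₁ y hΔ _ ih =>
      obtain ⟨ts, hts, rfl, rfl⟩ := ih
      exact ⟨(p, x₁, y₁, q) :: ts, ⟨hΔ, rfl, hts⟩, rfl, rfl⟩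
  · rintro ⟨ts, hts, rfl, rfl⟩
    induction ts generalizing p with
    | nil =>
      obtain rfl : p = q := hts
      exact Run.nil p
    | cons tr ts ih =>
      obtain ⟨hΔ, rfl, hts⟩ := hts
      exact Run.cons hΔ (ih hts)

lemma IsTrace.pow {p : A.Q} {l : List (A.Q × List α × List β × A.Q)}
    (h : A.IsTrace p l p) (k : ℕ) : A.IsTrace p (wordPow l k) p := by
  induction k with
  | zero => rfl
  | succ k ih => exact wordPow_succ l k ▸ isTrace_append.mpr ⟨p, h, ih⟩

lemma IsTrace.pump {p q : A.Q} {Aᵢ M Bⱼ : List (A.Q × List α × List β × A.Q)}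
    {tr : A.Q × List α × List β × A.Q} (h : A.IsTrace p (Aᵢ ++ tr :: (M ++ tr :: Bⱼ)) q)
    (k : ℕ) : A.IsTrace p (Aᵢ ++ (wordPow (tr :: M) k ++ tr :: Bⱼ)) q := by
  obtain ⟨r, hAᵢ, hΔ, hr, hrest⟩ := isTrace_append.mp h
  obtain ⟨r', hM, -, hr', hBⱼ⟩ := isTrace_append.mp hrest
  obtain rfl : r' = r := hr'.symm.trans hr
  have hloop : A.IsTrace r' (tr :: M) r' := ⟨hΔ, hr, hM⟩
  exact isTrace_append.mpr ⟨r', hAᵢ, isTrace_append.mpr ⟨r', hloop.pow k, hΔ, hr, hBⱼ⟩⟩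

lemma IsTrace.exists_readsAt {p q : A.Q} {ts : List (A.Q × List α × List β × A.Q)} {i : ℕ}
    (htr : A.IsTrace p ts q) (h : i < (inputOf ts).length) :
    ∃ s ∈ A.letterSlots, ReadsAt ts i s.1 s.2 := by
  obtain ⟨tr, d, Aₚ, Bₛ, rfl, hd, hi⟩ := exists_readsAt_of_lt_length h
  obtain ⟨r, -, hΔ, -⟩ := isTrace_append.mp htr
  exact ⟨(tr, d), ⟨hΔ, hd⟩, Aₚ, Bₛ, rfl, hd, hi⟩

lemma IsTrace.exists_pump {p q : A.Q} {ts : List (A.Q × List α × List β × A.Q)} {i j d : ℕ}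
    {tr : A.Q × List α × List β × A.Q} (htr : A.IsTrace p ts q)
    (hi : ReadsAt ts i tr d) (hj : ReadsAt ts j tr d) (hij : i < j) :
    ∃ a b c : List β, ∀ k, A.Run p
      ((inputOf ts).take i ++ wordPow (((inputOf ts).take j).drop i) k ++ (inputOf ts).drop j)
      (a ++ wordPow b k ++ c) q := by
  have hd : d < tr.2.1.length := by
    obtain ⟨-, -, -, hd, -⟩ := hi
    exact hd
  obtain ⟨Aᵢ, M, Bⱼ, rfl, rfl, rfl⟩ := hi.exists_loop hj hij
  set s := tr.2.1.take d
  set r := tr.2.1.drop d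
  have hsr : tr.2.1 = s ++ r := (List.take_append_drop d tr.2.1).symm
  have hword : ∀ k, inputOf (Aᵢ ++ (wordPow (tr :: M) k ++ tr :: Bⱼ)) =
      (inputOf Aᵢ ++ s) ++ wordPow (r ++ inputOf M ++ s) k ++ (r ++ inputOf Bⱼ) := by
    intro k
    simp only [inputOf, List.flatMap_append, flatMap_wordPow, List.flatMap_cons, hsr,
      List.append_assoc]
    rw [← List.append_assoc (wordPow _ k), wordPow_append_conj]
    simp only [List.append_assoc]
  have hw : inputOf (Aᵢ ++ tr :: (M ++ tr :: Bⱼ)) =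
      (inputOf Aᵢ ++ s) ++ (r ++ inputOf M ++ s) ++ (r ++ inputOf Bⱼ) := by
    simpa using hword 1
  have hs : s.length = d := by simp [s]; omega
  obtain ⟨hx, hy, hz⟩ := take_drop_of_eq_append hw
  have hlen : (inputOf (Aᵢ ++ tr :: M)).length + d =
      (inputOf Aᵢ ++ s).length + (r ++ inputOf M ++ s).length := by
    have hsr' := congrArg List.length hsr
    simp only [inputOf, List.flatMap_append, List.flatMap_cons, List.length_append] at hsr' ⊢
    omega
  rw [hlen, ← hs, ← List.length_append, hx, hy, hz]
  refine ⟨outputOf Aᵢ, outputOf (tr :: M), outputOf (tr :: Bⱼ), fun k => ?_⟩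
  rw [← hword k]
  refine run_iff_exists_trace.mpr ⟨_, htr.pump k, rfl, ?_⟩
  simp only [outputOf, List.flatMap_append, flatMap_wordPow, List.append_assoc]

lemma pumpsAlong_of_readsAt {t : List α → Option (List β)}
    (ht : ∀ x y, t x = some y ↔ (x, y) ∈ A.T) {p q : A.Q} (hp : p ∈ A.I) (hq : q ∈ A.F)
    {ts : List (A.Q × List α × List β × A.Q)} (htr : A.IsTrace p ts q) {i j d : ℕ}
    {tr : A.Q × List α × List β × A.Q} (hi : ReadsAt ts i tr d) (hj : ReadsAt ts j tr d)
    (hij : i < j) :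
    PumpsAlong t ((inputOf ts).take i) (((inputOf ts).take j).drop i) ((inputOf ts).drop j) := by
  obtain ⟨a, b, c, hrun⟩ := htr.exists_pump hi hj hij
  exact ⟨a, b, c ++ A.o q, fun k => (ht _ _).mpr ⟨p, q, _, hp, hq, hrun k, by simp⟩⟩

noncomputable def pumpingBound (A₁ A₂ : Transducer α β) : ℕ :=
  (A₁.letterSlots ×ˢ A₂.letterSlots).ncard

lemma exists_pumpsAlong_pair {A₁ A₂ : Transducer α β} {t₁ t₂ : List α → Option (List β)}
    (hA₁ : ∀ x y, t₁ x = some y ↔ (x, y) ∈ A₁.T) (hA₂ : ∀ x y, t₂ x = some y ↔ (x, y) ∈ A₂.T)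
    {w : List α} (hw₁ : w ∈ pdom t₁) (hw₂ : w ∈ pdom t₂) (hlen : pumpingBound A₁ A₂ < w.length) :
    ∃ x y z, x ++ y ++ z = w ∧ y ≠ [] ∧ PumpsAlong t₁ x y z ∧ PumpsAlong t₂ x y z := by
  obtain ⟨v₁, hv₁⟩ := Option.ne_none_iff_exists'.mp hw₁
  obtain ⟨v₂, hv₂⟩ := Option.ne_none_iff_exists'.mp hw₂
  obtain ⟨p₁, q₁, _, hp₁, hq₁, hrun₁ : A₁.Run p₁ w _ q₁, -⟩ := (hA₁ w v₁).mp hv₁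
  obtain ⟨p₂, q₂, _, hp₂, hq₂, hrun₂ : A₂.Run p₂ w _ q₂, -⟩ := (hA₂ w v₂).mp hv₂
  obtain ⟨ts₁, htr₁, hin₁, -⟩ := run_iff_exists_trace.mp hrun₁
  obtain ⟨ts₂, htr₂, hin₂, -⟩ := run_iff_exists_trace.mp hrun₂
  have hsig : ∀ i ∈ Set.Iio w.length, ∃ s ∈ A₁.letterSlots ×ˢ A₂.letterSlots,
      ReadsAt ts₁ i s.1.1 s.1.2 ∧ ReadsAt ts₂ i s.2.1 s.2.2 := fun i hi => by
    obtain ⟨s₁, hs₁, h₁⟩ := htr₁.exists_readsAt (hin₁ ▸ hi)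
    obtain ⟨s₂, hs₂, h₂⟩ := htr₂.exists_readsAt (hin₂ ▸ hi)
    exact ⟨(s₁, s₂), ⟨hs₁, hs₂⟩, h₁, h₂⟩
  have : Nonempty (((A₁.Q × List α × List β × A₁.Q) × ℕ) ×
      ((A₂.Q × List α × List β × A₂.Q) × ℕ)) :=
    ⟨(hsig 0 (by simp only [Set.mem_Iio]; omega)).choose⟩
  choose! sig hsig_mem hsig_reads using hsig
  have hcard : (Set.Iio w.length).ncard = w.length := by simp
  obtain ⟨i, hi, j, hj, hne, hsig_eq⟩ := Set.exists_ne_map_eq_of_ncard_lt_of_maps_to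
    (by rw [hcard]; exact hlen) hsig_mem ((letterSlots_finite A₁).prod (letterSlots_finite A₂))
  wlog hij : i < j generalizing i j
  · exact this j hj i hi hne.symm hsig_eq.symm (by omega)
  obtain ⟨hi₁, hi₂⟩ := hsig_reads i hi
  obtain ⟨hj₁, hj₂⟩ := hsig_reads j hj
  rw [hsig_eq] at hi₁ hi₂
  refine ⟨w.take i, (w.take j).drop i, w.drop j, ?_, ?_,
    hin₁ ▸ pumpsAlong_of_readsAt hA₁ hp₁ hq₁ htr₁ hi₁ hj₁ hij,
    hin₂ ▸ pumpsAlong_of_readsAt hA₂ hp₂ hq₂ htr₂ hi₂ hj₂ hij⟩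
  · exact take_append_drop_take_append_drop w hij.le
  · simp only [Set.mem_Iio] at hj
    simp [← List.length_eq_zero_iff]
    omega

end Transducer

section NotAdjacent

variable {α β : Type} [DecidableEq β] {t₁ t₂ : List α → Option (List β)} {x y z : List α}

lemma PumpsAlong.suffDist_const_or_linear (h₁ : PumpsAlong t₁ x y z) (h₂ : PumpsAlong t₂ x y z) :
    (∀ k, suffDist (pval t₁ (x ++ wordPow y k ++ z)) (pval t₂ (x ++ wordPow y k ++ z)) =
      suffDist (pval t₁ (x ++ z)) (pval t₂ (x ++ z))) ∨
    ∃ A, ∀ k, k ≤ suffDist (pval t₁ (x ++ wordPow y k ++ z))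
      (pval t₂ (x ++ wordPow y k ++ z)) + A := by
  obtain ⟨a₁, b₁, c₁, h₁⟩ := h₁
  obtain ⟨a₂, b₂, c₂, h₂⟩ := h₂
  have h₁₀ : t₁ (x ++ z) = some (a₁ ++ c₁) := by simpa using h₁ 0
  have h₂₀ : t₂ (x ++ z) = some (a₂ ++ c₂) := by simpa using h₂ 0
  simp only [pval, h₁, h₂, h₁₀, h₂₀, Option.getD_some]
  exact suffDist_pump_const_or_linear a₁ b₁ c₁ a₂ b₂ c₂

theorem exists_linear_family_of_not_adjacent [Finite α] (h₁ : IsRationalFun t₁)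
    (h₂ : IsRationalFun t₂) (hna : ¬ Adjacent t₁ t₂) :
    ∃ x y z : List α, (∀ k, x ++ wordPow y k ++ z ∈ pdom t₁ ∧ x ++ wordPow y k ++ z ∈ pdom t₂) ∧
      ∃ A, ∀ k, k ≤ suffDist (pval t₁ (x ++ wordPow y k ++ z))
        (pval t₂ (x ++ wordPow y k ++ z)) + A := by
  obtain ⟨A₁, hA₁⟩ := h₁
  obtain ⟨A₂, hA₂⟩ := h₂
  obtain ⟨B, hB⟩ := ((List.finite_length_le α (A₁.pumpingBound A₂)).image
    fun w => suffDist (pval t₁ w) (pval t₂ w)).bddAbove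
  obtain ⟨_, ⟨w₀, hw₀⟩, hB₀⟩ := Set.Infinite.exists_gt hna B
  obtain ⟨w, ⟨hw₁, hw₂, hwB⟩, hmin⟩ := (InvImage.wf List.length wellFounded_lt).has_min
    {w | w ∈ pdom t₁ ∧ w ∈ pdom t₂ ∧ B < suffDist (pval t₁ w) (pval t₂ w)}
    ⟨w₀, hw₀.1, hw₀.2.1, hw₀.2.2 ▸ hB₀⟩
  have hlong : A₁.pumpingBound A₂ < w.length := by
    by_contra! hshort
    exact absurd (hB ⟨w, hshort, rfl⟩) (not_le.mpr hwB)
  obtain ⟨x, y, z, rfl, hy, hp₁, hp₂⟩ := Transducer.exists_pumpsAlong_pair hA₁ hA₂ hw₁ hw₂ hlong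
  refine ⟨x, y, z, fun k => ⟨hp₁.mem_pdom k, hp₂.mem_pdom k⟩,
    (hp₁.suffDist_const_or_linear hp₂).resolve_left fun hconst => ?_⟩
  refine hmin (x ++ z) ⟨by simpa using hp₁.mem_pdom 0, by simpa using hp₂.mem_pdom 0, ?_⟩ ?_
  · simpa [← hconst 1] using hwB
  · have := List.length_pos_iff.mpr hy
    simp only [InvImage, List.length_append]
    omega

end NotAdjacent

theorem statement12_general {α β : Type} [Fintype α] [DecidableEq β]
    (t₁ t₂ : List α → Option (List β))
    (h₁ : IsRationalFun t₁) (h₂ : IsRationalFun t₂)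
    (hna : ¬ Adjacent t₁ t₂) :
    (∃ x y z : List α,
      (∀ k : ℕ, x ++ (List.replicate k y).flatten ++ z ∈ pdom t₁ ∧
                x ++ (List.replicate k y).flatten ++ z ∈ pdom t₂) ∧
      ∃ c : ℝ, 0 < c ∧ ∃ k₀ : ℕ, ∀ k : ℕ, k₀ ≤ k →
        c * (k : ℝ) ≤ (suffDist (pval t₁ (x ++ (List.replicate k y).flatten ++ z))
                                (pval t₂ (x ++ (List.replicate k y).flatten ++ z)) : ℝ)) ∧
    ∃ C : ℕ, ∀ k : ℕ, ∃ x : List α, x ∈ pdom t₁ ∧ x ∈ pdom t₂ ∧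
      x.length ≤ C * (k + 1) ∧ k ≤ suffDist (pval t₁ x) (pval t₂ x) := by
  obtain ⟨x, y, z, hdom, A, hlin⟩ := exists_linear_family_of_not_adjacent h₁ h₂ hna
  refine ⟨⟨x, y, z, hdom, 1 / 2, by norm_num, 2 * A, fun k hk => ?_⟩,
    x.length + z.length + (A + 1) * y.length + 1,
    fun k => ⟨x ++ wordPow y (k + A) ++ z, (hdom _).1, (hdom _).2, ?_, ?_⟩⟩
  · have hk' : (k : ℝ) ≤ 2 * (suffDist (pval t₁ (x ++ wordPow y k ++ z))
        (pval t₂ (x ++ wordPow y k ++ z)) : ℝ) := by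
      exact_mod_cast (by have := hlin k; omega)
    change (1 / 2 : ℝ) * k ≤ (suffDist (pval t₁ (x ++ wordPow y k ++ z))
      (pval t₂ (x ++ wordPow y k ++ z)) : ℝ)
    linarith
  · have hkA : (k + A) * y.length ≤ (A + 1) * (k + 1) * y.length :=
      Nat.mul_le_mul_right _ (by nlinarith)
    simp only [List.length_append, length_wordPow]
    nlinarith
  · have := hlin (k + A)
    omega

/-- short witnesses: if two rational functions `t₁, t₂` are not
adjacent then there are `x, y, z` with `x y^k z` in both domains and
`‖t₁(x y^k z), t₂(x y^k z)‖ = Ω(k)`; in particular, for each `k` there is a short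
word on which the two functions are at distance at least `k`. -/
theorem statement12 {α β : Type} [Fintype α] [Fintype β] [DecidableEq β]
    (t₁ t₂ : List α → Option (List β))
    (h₁ : IsRationalFun t₁) (h₂ : IsRationalFun t₂)
    (hna : ¬ Adjacent t₁ t₂) :
    (∃ x y z : List α,
      (∀ k : ℕ, x ++ (List.replicate k y).flatten ++ z ∈ pdom t₁ ∧
                x ++ (List.replicate k y).flatten ++ z ∈ pdom t₂) ∧
      ∃ c : ℝ, 0 < c ∧ ∃ k₀ : ℕ, ∀ k : ℕ, k₀ ≤ k →
        c * (k : ℝ) ≤ (suffDist (pval t₁ (x ++ (List.replicate k y).flatten ++ z))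
                                (pval t₂ (x ++ (List.replicate k y).flatten ++ z)) : ℝ)) ∧
    ∃ C : ℕ, ∀ k : ℕ, ∃ x : List α, x ∈ pdom t₁ ∧ x ∈ pdom t₂ ∧
      x.length ≤ C * (k + 1) ∧ k ≤ suffDist (pval t₁ x) (pval t₂ x) :=
  statement12_general t₁ t₂ h₁ h₂ hna
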